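/- Let X, Y be Polish spaces with Borel probability measures μ, ν and c : X × Y → [0,∞] Borel measurable with c(x,y) < ∞ for (μ⊗ν)-a.e. (x,y). Let π ∈ Π(μ,ν) have finite cost and Γ ⊆ X × Y be Borel with π(Γ) = 1 and c finite on Γ. Then there exist Borel sets O ⊆ X and U ⊆ Y such that Γ' = Γ ∩ (O × U) satisfies π(Γ') = 1 and (Γ',c) is connecting. -/

import Mathlib

/-!
Since `c < ∞` holds `μ ⊗ ν`-a.e., Fubini and the marginal conditions give a point
`p₀ = (x₀, y₀) ∈ Γ` whose slices `c(·, y₀)` and `c(x₀, ·)` are finite a.e.; cutting `Γ` down to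
those slices loses no `π`-mass, and then any two points of the remaining set are linked by the
chain `p, p₀, q`.
-/

open MeasureTheory Set
open scoped ENNReal

noncomputable section

def IsCoupling {X Y : Type*} [MeasurableSpace X] [MeasurableSpace Y]
    (μ : Measure X) (ν : Measure Y) (π : Measure (X × Y)) : Prop :=
  π.map Prod.fst = μ ∧ π.map Prod.snd = ν

def CMonotoneSet {X Y : Type*} (c : X × Y → ℝ≥0∞) (Γ : Set (X × Y)) : Prop :=
  ∀ (n : ℕ) (f : Fin (n + 1) → X × Y), (∀ i, f i ∈ Γ) →
    ∑ i, c (f i) ≤ ∑ i, c ((f i).1, (f (i + 1)).2)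

def ChainLe {X Y : Type*} (c : X × Y → ℝ≥0∞) (Γ : Set (X × Y)) (p q : X × Y) : Prop :=
  ∃ (n : ℕ) (g : Fin (n + 1) → X × Y), (∀ i, g i ∈ Γ) ∧ g 0 = p ∧ g (Fin.last n) = q ∧
    ∀ i : Fin n, c ((g i.succ).1, (g i.castSucc).2) < ⊤

def ChainEquiv {X Y : Type*} (c : X × Y → ℝ≥0∞) (Γ : Set (X × Y)) (p q : X × Y) : Prop :=
  ChainLe c Γ p q ∧ ChainLe c Γ q p

def Connecting {X Y : Type*} (c : X × Y → ℝ≥0∞) (Γ : Set (X × Y)) : Prop :=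
  (∀ p ∈ Γ, c p < ⊤) ∧ ∀ p ∈ Γ, ∀ q ∈ Γ, ChainEquiv c Γ p q

lemma chainLe_of_mid {X Y : Type*} {c : X × Y → ℝ≥0∞} {Γ : Set (X × Y)} {p m q : X × Y}
    (hp : p ∈ Γ) (hm : m ∈ Γ) (hq : q ∈ Γ)
    (hpm : c (m.1, p.2) < ⊤) (hmq : c (q.1, m.2) < ⊤) : ChainLe c Γ p q := by
  refine ⟨2, ![p, m, q], ?_, rfl, rfl, ?_⟩
  · intro i; fin_cases i <;> simpa
  · intro i; fin_cases i <;> simpa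

lemma connecting_of_hub {X Y : Type*} {c : X × Y → ℝ≥0∞} {Γ : Set (X × Y)} {m : X × Y}
    (hΓ : ∀ p ∈ Γ, c p < ⊤) (hm : m ∈ Γ) (hfst : ∀ p ∈ Γ, c (p.1, m.2) < ⊤)
    (hsnd : ∀ p ∈ Γ, c (m.1, p.2) < ⊤) : Connecting c Γ :=
  ⟨hΓ, fun p hp q hq =>
    ⟨chainLe_of_mid hp hm hq (hsnd p hp) (hfst q hq),
      chainLe_of_mid hq hm hp (hsnd q hq) (hfst p hp)⟩⟩

lemma connecting_inter_slices {X Y : Type*} {c : X × Y → ℝ≥0∞} {Γ : Set (X × Y)} {p₀ : X × Y}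
    (hΓ : ∀ p ∈ Γ, c p < ⊤) (hp₀ : p₀ ∈ Γ) :
    Connecting c (Γ ∩ {x | c (x, p₀.2) < ⊤} ×ˢ {y | c (p₀.1, y) < ⊤}) :=
  connecting_of_hub (fun p hp => hΓ p hp.1) ⟨hp₀, hΓ p₀ hp₀, hΓ p₀ hp₀⟩
    (fun _ hp => hp.2.1) (fun _ hp => hp.2.2)

section IsCoupling

variable {X Y : Type*} [MeasurableSpace X] [MeasurableSpace Y]
  {μ : Measure X} {ν : Measure Y} {π : Measure (X × Y)}

lemma IsCoupling.quasiMeasurePreserving_fst (hπ : IsCoupling μ ν π) :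
    Measure.QuasiMeasurePreserving Prod.fst π μ :=
  ⟨measurable_fst, hπ.1 ▸ .rfl⟩

lemma IsCoupling.quasiMeasurePreserving_snd (hπ : IsCoupling μ ν π) :
    Measure.QuasiMeasurePreserving Prod.snd π ν :=
  ⟨measurable_snd, hπ.2 ▸ .rfl⟩

end IsCoupling

theorem exists_connecting_subset_general
    {X Y : Type*} [MeasurableSpace X] [MeasurableSpace Y]
    (μ : Measure X) (ν : Measure Y) [IsProbabilityMeasure μ] [IsProbabilityMeasure ν]
    (c : X × Y → ℝ≥0∞) (hc : Measurable c)
    (hcfin : ∀ᵐ p ∂(μ.prod ν), c p < ⊤)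
    (π : Measure (X × Y)) (hπ : IsCoupling μ ν π)
    (Γ : Set (X × Y)) (hΓ1 : π Γ = 1)
    (hΓfin : ∀ p ∈ Γ, c p < ⊤) :
    ∃ (O : Set X) (U : Set Y), MeasurableSet O ∧ MeasurableSet U ∧
      π (Γ ∩ O ×ˢ U) = 1 ∧ Connecting c (Γ ∩ O ×ˢ U) := by
  have hxy : ∀ᵐ x ∂μ, ∀ᵐ y ∂ν, c (x, y) < ⊤ := Measure.ae_ae_of_ae_prod hcfin
  have hyx : ∀ᵐ y ∂ν, ∀ᵐ x ∂μ, c (x, y) < ⊤ :=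
    (Measure.ae_ae_comm (p := fun x y => c (x, y) < ⊤)
      (measurableSet_lt hc measurable_const)).1 hxy
  have hgood : {p : X × Y | (∀ᵐ x ∂μ, c (x, p.2) < ⊤) ∧ ∀ᵐ y ∂ν, c (p.1, y) < ⊤} ∈ ae π :=
    (hπ.quasiMeasurePreserving_snd.ae hyx).and (hπ.quasiMeasurePreserving_fst.ae hxy)
  obtain ⟨p₀, hp₀Γ, hp₀x, hp₀y⟩ := nonempty_of_measure_ne_zero (μ := π) <| by
    rw [measure_inter_conull (mem_ae_iff.1 hgood), hΓ1]
    exact one_ne_zero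
  refine ⟨{x | c (x, p₀.2) < ⊤}, {y | c (p₀.1, y) < ⊤},
    measurableSet_lt (by fun_prop) measurable_const,
    measurableSet_lt (by fun_prop) measurable_const, ?_, connecting_inter_slices hΓfin hp₀Γ⟩
  have hslices : {x | c (x, p₀.2) < ⊤} ×ˢ {y | c (p₀.1, y) < ⊤} ∈ ae π :=
    (hπ.quasiMeasurePreserving_fst.ae hp₀x).and (hπ.quasiMeasurePreserving_snd.ae hp₀y)
  rw [measure_inter_conull (mem_ae_iff.1 hslices), hΓ1]

theorem exists_connecting_subset
    {X Y : Type*} [MeasurableSpace X] [TopologicalSpace X] [PolishSpace X] [BorelSpace X]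
    [MeasurableSpace Y] [TopologicalSpace Y] [PolishSpace Y] [BorelSpace Y]
    (μ : Measure X) (ν : Measure Y) [IsProbabilityMeasure μ] [IsProbabilityMeasure ν]
    (c : X × Y → ℝ≥0∞) (hc : Measurable c)
    (hcfin : ∀ᵐ p ∂(μ.prod ν), c p < ⊤)
    (π : Measure (X × Y)) (hπ : IsCoupling μ ν π) (hfin : ∫⁻ p, c p ∂π ≠ ⊤)
    (Γ : Set (X × Y)) (hΓm : MeasurableSet Γ) (hΓ1 : π Γ = 1)
    (hΓfin : ∀ p ∈ Γ, c p < ⊤) :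
    ∃ (O : Set X) (U : Set Y), MeasurableSet O ∧ MeasurableSet U ∧
      π (Γ ∩ O ×ˢ U) = 1 ∧ Connecting c (Γ ∩ O ×ˢ U) :=
  exists_connecting_subset_general μ ν c hc hcfin π hπ Γ hΓ1 hΓfin
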